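/- arXiv:2107.10978 — 2 statements merged into one kernel-verified Lean document; each statement's English description precedes it below -/
import Mathlib

section
/- For any real a > 0 and positive integer n, ∑_{k=1}^{n} k·ψ₀(k+a) = (1/2)(−a² + a + n² + n)ψ₀(a+n+1) + (1/2)a(a−1)ψ₀(a+1) + (1/4)n(2a − n − 3). -/
open Finset

/-- The `m`-th polygamma function: the `(m+1)`-th derivative of `log ∘ Γ`. -/
noncomputable def psi (m : ℕ) (x : ℝ) : ℝ :=
  iteratedDeriv (m + 1) (fun y => Real.log (Real.Gamma y)) x

lemma differentiableAt_log_Gamma {x : ℝ} (hx : 0 < x) :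
    DifferentiableAt ℝ (fun y => Real.log (Real.Gamma y)) x :=
  (Real.differentiableAt_Gamma fun m => by
      nlinarith [Nat.cast_nonneg (α := ℝ) m]).log (Real.Gamma_pos_of_pos hx).ne'

lemma psi_zero_add_one {x : ℝ} (hx : 0 < x) : psi 0 (x + 1) = psi 0 x + x⁻¹ := by
  have h_shift : psi 0 (x + 1) = deriv (fun y => Real.log (Real.Gamma (y + 1))) x := by
    simp only [psi, zero_add, iteratedDeriv_one]
    exact (deriv_comp_add_const _ 1 x).symm
  have h_log : (fun y => Real.log (Real.Gamma (y + 1))) =ᶠ[nhds x]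
      fun y => Real.log y + Real.log (Real.Gamma y) := by
    filter_upwards [eventually_gt_nhds hx] with y hy
    rw [Real.Gamma_add_one hy.ne', Real.log_mul hy.ne' (Real.Gamma_pos_of_pos hy).ne']
  rw [h_shift, h_log.deriv_eq,
    deriv_fun_add (Real.differentiableAt_log hx.ne') (differentiableAt_log_Gamma hx),
    Real.deriv_log, add_comm]
  simp only [psi, zero_add, iteratedDeriv_one]

theorem sum_Icc_mul_of_add_one_eq {f : ℝ → ℝ} (hf : ∀ x, 0 < x → f (x + 1) = f x + x⁻¹)
    {a : ℝ} (ha : 0 < a) (n : ℕ) :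
    ∑ k ∈ Icc 1 n, (k : ℝ) * f (k + a) =
      (1/2) * (-a^2 + a + n^2 + n) * f (a + n + 1) + (1/2) * a * (a - 1) * f (a + 1) +
        (1/4) * n * (2*a - n - 3) := by
  induction n with
  | zero => simp only [Icc_eq_empty_of_lt one_pos, sum_empty, Nat.cast_zero, add_zero]; ring
  | succ n ih =>
    have h_pos : 0 < a + n + 1 := by positivity
    rw [sum_Icc_succ_top (by omega), ih]
    push_cast
    rw [show (n + 1 : ℝ) + a = a + n + 1 by ring,
      show a + (n + 1 : ℝ) + 1 = a + n + 1 + 1 by ring, hf _ h_pos]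
    field_simp
    ring

theorem stmt_1_general (a : ℝ) (ha : 0 < a) (n : ℕ) :
    ∑ k ∈ Icc 1 n, (k : ℝ) * psi 0 ((k : ℝ) + a) =
      (1/2) * (-a^2 + a + n^2 + n) * psi 0 (a + n + 1) + (1/2) * a * (a - 1) * psi 0 (a + 1) +
        (1/4) * n * (2*a - n - 3) :=
  sum_Icc_mul_of_add_one_eq (fun _ hx => psi_zero_add_one hx) ha n

theorem stmt_1 (a : ℝ) (ha : 0 < a) (n : ℕ) (hn : 0 < n) :
    ∑ k ∈ Icc 1 n, (k : ℝ) * psi 0 ((k : ℝ) + a) =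
      (1/2) * (-a^2 + a + n^2 + n) * psi 0 (a + n + 1) + (1/2) * a * (a - 1) * psi 0 (a + 1) +
        (1/4) * n * (2*a - n - 3) :=
  stmt_1_general a ha n
end

section
/- For any real a > 0 and positive integer n, ∑_{k=1}^{n} ψ₁(k+a)² = 2∑_{k=1}^{n} ψ₁(k+a)/(k+a) + (1/2)[−ψ₂(a+n+1) + ψ₂(a+1) + 2(a+n)ψ₁(a+n+1)² − 2aψ₁(a+1)²]. -/
open Finset

/-!
Differentiating `log Γ(x + 1) = log x + log Γ(x)` gives `ψ₁(x + 1) = ψ₁(x) - 1/x²` and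
`ψ₂(x + 1) = ψ₂(x) + 2/x³`. With these, `ψ₁(x)² - 2ψ₁(x)/x = (g(x + 1) - g(x))/2` for
`g(x) = -ψ₂(x) + 2(x - 1)ψ₁(x)²`, so the sum telescopes.
-/

open Real Filter Topology
open scoped Nat

lemma Real.analyticAt_Gamma {x : ℝ} (hx : 0 < x) : AnalyticAt ℝ Gamma x := by
  have hC : AnalyticAt ℂ Complex.Gamma x := by
    refine DifferentiableOn.analyticAt (s := {s : ℂ | 0 < s.re}) (fun s hs => ?_) ?_
    · refine (Complex.differentiableAt_Gamma s fun m hm => ?_).differentiableWithinAt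
      simp only [hm, Set.mem_ofPred_eq, Complex.neg_re, Complex.natCast_re] at hs
      linarith [m.cast_nonneg (α := ℝ)]
    · exact (isOpen_lt continuous_const Complex.continuous_re).mem_nhds (by simpa using hx)
  refine ((Complex.reCLM.analyticAt _).comp
    (hC.restrictScalars.comp (Complex.ofRealCLM.analyticAt x))).congr ?_
  exact Eventually.of_forall fun y => by simp [Complex.Gamma_ofReal]

lemma Real.contDiffAt_log_Gamma {x : ℝ} (hx : 0 < x) {n : WithTop ℕ∞} :
    ContDiffAt ℝ n (fun y => log (Gamma y)) x :=
  (contDiffAt_log.mpr (Gamma_pos_of_pos hx).ne').comp x (analyticAt_Gamma hx).contDiffAt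

lemma Real.iteratedDeriv_succ_log (k : ℕ) (x : ℝ) :
    iteratedDeriv (k + 1) log x = (-1) ^ k * k ! * x ^ (-k - 1 : ℤ) := by
  rw [iteratedDeriv_succ', deriv_log', iteratedDeriv_eq_iterate, iter_deriv_inv, neg_sub_comm]

lemma psi_add_one (m : ℕ) {x : ℝ} (hx : 0 < x) :
    psi m (x + 1) = psi m x + (-1) ^ m * m ! * x ^ (-m - 1 : ℤ) := by
  have hshift : (fun y => log (Gamma (y + 1))) =ᶠ[𝓝 x] log + fun y => log (Gamma y) := by
    filter_upwards [eventually_gt_nhds hx] with y hy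
    rw [Gamma_add_one hy.ne', log_mul hy.ne' (Gamma_pos_of_pos hy).ne']
    rfl
  rw [psi, ← congrFun (iteratedDeriv_comp_add_const _ _ 1) x, hshift.iteratedDeriv_eq,
    iteratedDeriv_add (contDiffAt_log.mpr hx.ne') (contDiffAt_log_Gamma hx),
    Real.iteratedDeriv_succ_log, psi, add_comm]

lemma psi_one_add_one {x : ℝ} (hx : 0 < x) : psi 1 (x + 1) = psi 1 x - 1 / x ^ 2 := by
  norm_num [psi_add_one 1 hx, sub_eq_add_neg]

lemma psi_two_add_one {x : ℝ} (hx : 0 < x) : psi 2 (x + 1) = psi 2 x + 2 / x ^ 3 := by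
  norm_num [psi_add_one 2 hx, div_eq_mul_inv]

lemma psi_one_sq_eq {x : ℝ} (hx : 0 < x) :
    psi 1 x ^ 2 = 2 * psi 1 x / x + (1 / 2) * (-psi 2 (x + 1) + psi 2 x
      + 2 * x * psi 1 (x + 1) ^ 2 - 2 * (x - 1) * psi 1 x ^ 2) := by
  rw [psi_one_add_one hx, psi_two_add_one hx]
  field_simp
  ring

theorem stmt_12_general (a : ℝ) (ha : 0 < a) (n : ℕ) :
    ∑ k ∈ Icc 1 n, (psi 1 ((k : ℝ) + a))^2 =
      2 * ∑ k ∈ Icc 1 n, psi 1 ((k : ℝ) + a) / ((k : ℝ) + a) +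
        (1/2) * (-psi 2 (a + n + 1) + psi 2 (a + 1) + 2 * (a + n) * (psi 1 (a + n + 1))^2 - 2 * a * (psi 1 (a + 1))^2) := by
  induction n with
  | zero => simp
  | succ n ih =>
    rw [sum_Icc_succ_top (by omega), sum_Icc_succ_top (by omega), ih]
    have hstep := psi_one_sq_eq (x := a + n + 1) (by positivity)
    push_cast
    rw [show (n + 1 + a : ℝ) = a + n + 1 by ring, show (a + (n + 1) : ℝ) = a + n + 1 by ring]
    linear_combination hstep

theorem stmt_12 (a : ℝ) (ha : 0 < a) (n : ℕ) (hn : 0 < n) :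
    ∑ k ∈ Icc 1 n, (psi 1 ((k : ℝ) + a))^2 =
      2 * ∑ k ∈ Icc 1 n, psi 1 ((k : ℝ) + a) / ((k : ℝ) + a) +
        (1/2) * (-psi 2 (a + n + 1) + psi 2 (a + 1) + 2 * (a + n) * (psi 1 (a + n + 1))^2 - 2 * a * (psi 1 (a + 1))^2) :=
  stmt_12_general a ha n
end
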